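/- Let f : ℝ → ℝ and u : ℝ → ℝ be infinitely differentiable, let x ∈ ℝ, and take κ = 1/3. Then the residual of the flux-and-solution-reconstruction (FSR) scheme satisfies Res_FSR(h) = O(h³) as h → 0⁺; that is, replacing the flux evaluation of the reconstructed solution by direct κ = 1/3 reconstruction of the flux makes the scheme genuinely third-order accurate for nonlinear conservation laws on a uniform grid. -/

import Mathlib

open Filter Topology Asymptotics

/-- Van Leer κ-reconstructed left state at the face `x + h/2`. -/
noncomputable def uLp (κ : ℝ) (u : ℝ → ℝ) (x h : ℝ) : ℝ :=
  κ * (u x + u (x + h)) / 2 + (1 - κ) * (u x + (u (x + h) - u (x - h)) / 4)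

/-- Van Leer κ-reconstructed right state at the face `x + h/2`. -/
noncomputable def uRp (κ : ℝ) (u : ℝ → ℝ) (x h : ℝ) : ℝ :=
  κ * (u (x + h) + u x) / 2 + (1 - κ) * (u (x + h) - (u (x + 2 * h) - u x) / 4)

/-- Van Leer κ-reconstructed left state at the face `x − h/2`. -/
noncomputable def uLm (κ : ℝ) (u : ℝ → ℝ) (x h : ℝ) : ℝ :=
  κ * (u (x - h) + u x) / 2 + (1 - κ) * (u (x - h) + (u x - u (x - 2 * h)) / 4)

/-- Van Leer κ-reconstructed right state at the face `x − h/2`. -/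
noncomputable def uRm (κ : ℝ) (u : ℝ → ℝ) (x h : ℝ) : ℝ :=
  κ * (u x + u (x - h)) / 2 + (1 - κ) * (u x - (u (x + h) - u (x - h)) / 4)

/-- The FSR (flux and solution reconstruction) numerical flux
`F̃ = (fL+fR)/2 − (|f′((uL+uR)/2)|/2)(uR−uL)`. -/
noncomputable def fsrFlux (f : ℝ → ℝ) (uL uR fL fR : ℝ) : ℝ :=
  (fL + fR) / 2 - (|deriv f ((uL + uR) / 2)| / 2) * (uR - uL)

/-- The FSR residual at `x` (with `κ = 1/3`) for the steady conservation law
`∂ₓ f(u) = s` with forcing `s(y) = d/dy f(u(y))`: the flux states are obtained by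
applying the κ-reconstruction formulas to `g = f ∘ u`. -/
noncomputable def fsrRes (f u : ℝ → ℝ) (x h : ℝ) : ℝ :=
  (fsrFlux f (uLp (1 / 3) u x h) (uRp (1 / 3) u x h)
      (uLp (1 / 3) (f ∘ u) x h) (uRp (1 / 3) (f ∘ u) x h)
    - fsrFlux f (uLm (1 / 3) u x h) (uRm (1 / 3) u x h)
        (uLm (1 / 3) (f ∘ u) x h) (uRm (1 / 3) (f ∘ u) x h)) / h
    - deriv f (u x) * deriv u x


noncomputable def lc {m : ℕ} (g : ℝ → ℝ) (x : ℝ) (c a : Fin m → ℝ) (h : ℝ) : ℝ :=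
  ∑ i, c i * g (x + a i * h)

lemma lc_contDiff {m : ℕ} {g : ℝ → ℝ} (hg : ContDiff ℝ (⊤:ℕ∞) g) (x : ℝ) (c a : Fin m → ℝ) :
    ContDiff ℝ (⊤:ℕ∞) (lc g x c a) := by
  apply ContDiff.sum
  intro i _
  exact contDiff_const.mul (hg.comp (contDiff_const.add (contDiff_const.mul contDiff_id)))

lemma lc_hasDerivAt {m : ℕ} {g : ℝ → ℝ} (hg : ContDiff ℝ (⊤:ℕ∞) g) (x : ℝ) (c a : Fin m → ℝ)
    (h : ℝ) :
    HasDerivAt (lc g x c a) (lc (deriv g) x (fun i => c i * a i) a h) h := by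
  have : (lc (deriv g) x (fun i => c i * a i) a h)
      = ∑ i : Fin m, (c i * (deriv g (x + a i * h) * a i)) := by
    unfold lc; apply Finset.sum_congr rfl; intros; ring
  rw [this]
  apply HasDerivAt.fun_sum
  intro i _
  have hlin : HasDerivAt (fun y : ℝ => x + a i * y) (a i) h := by
    simpa using (hasDerivAt_const h x).fun_add ((hasDerivAt_id h).const_mul (a i))
  have := ((hg.differentiable (by simp) (x + a i * h)).hasDerivAt.comp h hlin)
  exact this.const_mul (c i)

lemma lc_zero {m : ℕ} (g : ℝ → ℝ) (x : ℝ) (c a : Fin m → ℝ) :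
    lc g x c a 0 = (∑ i, c i) * g x := by
  simp [lc, Finset.sum_mul]

lemma lc_iteratedDeriv {m : ℕ} {g : ℝ → ℝ} (hg : ContDiff ℝ (⊤:ℕ∞) g) (x : ℝ)
    (c a : Fin m → ℝ) (k : ℕ) :
    iteratedDeriv k (lc g x c a) 0 = (∑ i, c i * a i ^ k) * iteratedDeriv k g x := by
  induction k generalizing g c with
  | zero => simp [lc_zero]
  | succ k ih =>
    rw [iteratedDeriv_succ']
    have hd : deriv (lc g x c a) = lc (deriv g) x (fun i => c i * a i) a :=
      funext fun h => (lc_hasDerivAt hg x c a h).deriv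
    rw [hd, ih (contDiff_infty_iff_deriv.mp hg).2, ← iteratedDeriv_succ']
    congr 1
    apply Finset.sum_congr rfl; intros; ring

lemma bound_of_iteratedDeriv_zero (n : ℕ) :
    ∀ ψ : ℝ → ℝ, ContDiff ℝ (⊤:ℕ∞) ψ → (∀ k < n, iteratedDeriv k ψ 0 = 0) →
      ∃ C, ∀ h ∈ Set.Ioc (0:ℝ) 1, |ψ h| ≤ C * h ^ n := by
  induction n with
  | zero =>
    intro ψ hψ _
    obtain ⟨C, hC⟩ := (isCompact_Icc (a := (0:ℝ)) (b := 1)).exists_bound_of_continuousOn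
      (hψ.continuous.continuousOn)
    exact ⟨C, fun h hh => by simpa using hC h ⟨le_of_lt hh.1, hh.2⟩⟩
  | succ n ih =>
    intro ψ hψ hz
    have hψ' : ContDiff ℝ (⊤:ℕ∞) (deriv ψ) := (contDiff_infty_iff_deriv.mp hψ).2
    obtain ⟨C, hC⟩ := ih (deriv ψ) hψ' (fun k hk => by
      rw [← iteratedDeriv_succ']; exact hz (k+1) (by omega))
    refine ⟨C, fun h hh => ?_⟩
    obtain ⟨ξ, hξ, hslope⟩ := exists_hasDerivAt_eq_slope ψ (deriv ψ) hh.1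
      (hψ.continuous.continuousOn)
      (fun y _ => (hψ.differentiable (by simp) y).hasDerivAt)
    have hψ0 : ψ 0 = 0 := by simpa using hz 0 (by omega)
    have hval : ψ h = deriv ψ ξ * h := by
      rw [hψ0, sub_zero, sub_zero] at hslope
      rw [hslope, div_mul_cancel₀ _ (ne_of_gt hh.1)]
    have hξIoc : ξ ∈ Set.Ioc (0:ℝ) 1 := ⟨hξ.1, le_trans (le_of_lt hξ.2) hh.2⟩
    have h1 := hC ξ hξIoc
    have hC0 : 0 ≤ C * ξ ^ n := le_trans (abs_nonneg _) h1
    have hCnn : 0 ≤ C := nonneg_of_mul_nonneg_left hC0 (pow_pos hξ.1 n)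
    calc |ψ h| = |deriv ψ ξ| * h := by
          rw [hval, abs_mul, abs_of_pos hh.1]
      _ ≤ C * ξ ^ n * h := by
          exact mul_le_mul_of_nonneg_right h1 hh.1.le
      _ ≤ C * h ^ n * h := by
          have h2 : ξ ^ n ≤ h ^ n := pow_le_pow_left₀ hξ.1.le hξ.2.le n
          have := mul_le_mul_of_nonneg_left h2 hCnn
          exact mul_le_mul_of_nonneg_right this hh.1.le
      _ = C * h ^ (n+1) := by ring

lemma isBigO_of_iteratedDeriv_zero {ψ : ℝ → ℝ} (hψ : ContDiff ℝ (⊤:ℕ∞) ψ) (n : ℕ)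
    (hz : ∀ k < n, iteratedDeriv k ψ 0 = 0) :
    ψ =O[𝓝[>] (0:ℝ)] fun h => h ^ n := by
  obtain ⟨C, hC⟩ := bound_of_iteratedDeriv_zero n ψ hψ hz
  apply IsBigO.of_bound C
  filter_upwards [Ioc_mem_nhdsGT_of_mem (Set.mem_Ico.mpr ⟨le_refl (0:ℝ), one_pos⟩)] with h hh
  have := hC h hh
  rwa [Real.norm_eq_abs, Real.norm_eq_abs, abs_of_pos (pow_pos hh.1 n)]

lemma lc_isBigO {m : ℕ} {g : ℝ → ℝ} (hg : ContDiff ℝ (⊤:ℕ∞) g) (x : ℝ) (c a : Fin m → ℝ)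
    (n : ℕ) (h0 : ∀ k < n, (∑ i, c i * a i ^ k) = 0) :
    lc g x c a =O[𝓝[>] (0:ℝ)] fun h => h ^ n := by
  apply isBigO_of_iteratedDeriv_zero (lc_contDiff hg x c a) n
  intro k hk
  rw [lc_iteratedDeriv hg x c a k, h0 k hk, zero_mul]

lemma iteratedDeriv_sub_const (F : ℝ → ℝ) (K : ℝ) (j : ℕ) :
    iteratedDeriv (j+1) (fun y => F y - K) = iteratedDeriv (j+1) F := by
  rw [iteratedDeriv_succ', iteratedDeriv_succ']
  have hde : (deriv fun y => F y - K) = deriv F := funext fun y => deriv_sub_const K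
  rw [hde]

lemma lc_sub_linear_isBigO {m : ℕ} {g : ℝ → ℝ} (hg : ContDiff ℝ (⊤:ℕ∞) g) (x : ℝ)
    (c a : Fin m → ℝ) (n : ℕ) (h0 : ∀ k < n, k ≠ 1 → (∑ i, c i * a i ^ k) = 0) :
    (fun h => lc g x c a h - ((∑ i, c i * a i) * deriv g x) * h)
      =O[𝓝[>] (0:ℝ)] fun h => h ^ n := by
  set K : ℝ := (∑ i, c i * a i) * deriv g x with hK
  have hsmooth : ContDiff ℝ (⊤:ℕ∞) (fun h => lc g x c a h - K * h) :=
    (lc_contDiff hg x c a).sub (contDiff_const.mul contDiff_id)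
  apply isBigO_of_iteratedDeriv_zero hsmooth n
  intro k hk
  have hd : deriv (fun h => lc g x c a h - K * h)
      = fun h => lc (deriv g) x (fun i => c i * a i) a h - K := by
    funext h
    exact (((lc_hasDerivAt hg x c a h).sub ((hasDerivAt_id h).const_mul K)).deriv).trans
      (by ring)
  match k with
  | 0 =>
    simp only [iteratedDeriv_zero]
    show lc g x c a 0 - K * 0 = 0
    rw [lc_zero]
    have h00 : (∑ i, c i) = 0 := by simpa using h0 0 hk (by omega)
    rw [h00]; ring
  | 1 =>
    rw [iteratedDeriv_succ', hd]
    simp only [iteratedDeriv_zero]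
    rw [lc_zero]
    have : (∑ i, (fun i => c i * a i) i) = ∑ i, c i * a i := rfl
    rw [this, hK]
    have hdg : deriv g x = iteratedDeriv 1 g x := by rw [iteratedDeriv_one]
    ring
  | (j+2) =>
    rw [iteratedDeriv_succ', hd]
    have : (fun h => lc (deriv g) x (fun i => c i * a i) a h - K)
        = fun h => (lc (deriv g) x (fun i => c i * a i) a) h - K := rfl
    rw [this, iteratedDeriv_sub_const,
      lc_iteratedDeriv (contDiff_infty_iff_deriv.mp hg).2 x _ a (j+1)]
    have hz : (∑ i, (c i * a i) * a i ^ (j+1)) = ∑ i, c i * a i ^ (j+2) := by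
      apply Finset.sum_congr rfl; intros; ring
    rw [hz, h0 (j+2) hk (by omega), zero_mul]

lemma div_h_isBigO {φ : ℝ → ℝ} {n : ℕ} (hφ : φ =O[𝓝[>] (0:ℝ)] fun h => h ^ (n+1)) :
    (fun h => φ h / h) =O[𝓝[>] (0:ℝ)] fun h => h ^ n := by
  have h1 : (fun h : ℝ => h⁻¹) =O[𝓝[>] (0:ℝ)] (fun h : ℝ => h⁻¹) := isBigO_refl _ _
  have h2 := hφ.mul h1
  apply h2.congr' (by filter_upwards with h; rw [div_eq_mul_inv])
  filter_upwards [self_mem_nhdsWithin] with h hh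
  have : (h:ℝ) ≠ 0 := ne_of_gt hh
  field_simp
  ring

set_option maxHeartbeats 2000000 in
/-- For smooth `f` and `u` and `κ = 1/3`, the FSR residual is `O(h³)` as `h → 0⁺`:
direct flux reconstruction makes the scheme genuinely third-order accurate for
nonlinear conservation laws on a uniform grid. -/
theorem fsr_third_order
    (f u : ℝ → ℝ) (hf : ContDiff ℝ (⊤ : ℕ∞) f) (hu : ContDiff ℝ (⊤ : ℕ∞) u) (x : ℝ) :
    (fun h : ℝ => fsrRes f u x h) =O[𝓝[>] (0 : ℝ)] fun h : ℝ => h ^ 3 := by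
  have hf' : ContDiff ℝ (⊤:ℕ∞) f := hf.of_le (by simp)
  have hu' : ContDiff ℝ (⊤:ℕ∞) u := hu.of_le (by simp)
  have hg : ContDiff ℝ (⊤:ℕ∞) (f ∘ u) := hf'.comp hu'
  have hdf : ContDiff ℝ (⊤:ℕ∞) (deriv f) := (contDiff_infty_iff_deriv.mp hf').2
  -- coefficient vectors
  have hT1 := lc_sub_linear_isBigO hg x ![2/3, -2/3, -1/12, 1/12] ![1, -1, 2, -2] 4
    (by
      intro k hk hk1
      interval_cases k <;> first
      | exact absurd rfl hk1
      | norm_num [Fin.sum_univ_four, Matrix.cons_val_zero, Matrix.cons_val_one,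
          Matrix.head_cons, Matrix.cons_val_two, Matrix.tail_cons, Matrix.cons_val_three])
  have hsumA : (∑ i, (![2/3, -2/3, -1/12, 1/12] : Fin 4 → ℝ) i * (![1, -1, 2, -2] : Fin 4 → ℝ) i) = 1 := by
    norm_num [Fin.sum_univ_four, Matrix.cons_val_zero, Matrix.cons_val_one,
      Matrix.head_cons, Matrix.cons_val_two, Matrix.tail_cons, Matrix.cons_val_three]
  have hderivg : deriv (f ∘ u) x = deriv f (u x) * deriv u x :=
    deriv_comp x (hf'.differentiable (by simp) (u x))
      (hu'.differentiable (by simp) x)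
  rw [hsumA, one_mul, hderivg] at hT1
  have hT1d := div_h_isBigO hT1
  -- dissipation terms
  have hδD := lc_isBigO hu' x ![-1/6, 2/3, -1, 2/3, -1/6] ![2, 1, 0, -1, -2] 4
    (by
      intro k hk
      interval_cases k <;>
        norm_num [Fin.sum_univ_five, Matrix.cons_val_zero, Matrix.cons_val_one,
          Matrix.head_cons, Matrix.cons_val_two, Matrix.tail_cons, Matrix.cons_val_three,
          Matrix.cons_val_four])
  have hδM := lc_isBigO hu' x ![-1/6, 1/2, -1/2, 1/6] ![1, 0, -1, -2] 3
    (by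
      intro k hk
      interval_cases k <;>
        norm_num [Fin.sum_univ_four, Matrix.cons_val_zero, Matrix.cons_val_one,
          Matrix.head_cons, Matrix.cons_val_two, Matrix.tail_cons, Matrix.cons_val_three])
  -- smoothness of the face midpoint states
  have hmp : ContDiff ℝ (⊤:ℕ∞) (fun h => (uLp (1/3) u x h + uRp (1/3) u x h) / 2) := by
    unfold uLp uRp; fun_prop (disch := norm_num)
  have hmm : ContDiff ℝ (⊤:ℕ∞) (fun h => (uLm (1/3) u x h + uRm (1/3) u x h) / 2) := by
    unfold uLm uRm; fun_prop (disch := norm_num)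
  -- bounded factor
  have hB : (fun h => |deriv f ((uLp (1/3) u x h + uRp (1/3) u x h) / 2)|)
      =O[𝓝[>] (0:ℝ)] (fun _ => (1:ℝ)) := by
    exact Filter.Tendsto.isBigO_one (F := ℝ)
      (((continuous_abs.comp (hdf.continuous.comp hmp.continuous)).tendsto 0).mono_left
        nhdsWithin_le_nhds)
  -- E = O(h)
  have hE : (fun h => deriv f ((uLp (1/3) u x h + uRp (1/3) u x h) / 2)
        - deriv f ((uLm (1/3) u x h + uRm (1/3) u x h) / 2))
      =O[𝓝[>] (0:ℝ)] fun h => h ^ 1 := by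
    apply isBigO_of_iteratedDeriv_zero
      ((hdf.comp hmp).sub (hdf.comp hmm)) 1
    intro k hk
    have hk0 : k = 0 := by omega
    subst hk0
    have e1 : (uLp (1/3) u x 0 + uRp (1/3) u x 0) / 2 = u x := by
      simp [uLp, uRp]; ring
    have e2 : (uLm (1/3) u x 0 + uRm (1/3) u x 0) / 2 = u x := by
      simp [uLm, uRm]; ring
    simp only [iteratedDeriv_zero]
    show deriv f ((uLp (1/3) u x 0 + uRp (1/3) u x 0) / 2)
      - deriv f ((uLm (1/3) u x 0 + uRm (1/3) u x 0) / 2) = 0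
    rw [e1, e2, sub_self]
  have habs : (fun h => |deriv f ((uLp (1/3) u x h + uRp (1/3) u x h) / 2)|
        - |deriv f ((uLm (1/3) u x h + uRm (1/3) u x h) / 2)|)
      =O[𝓝[>] (0:ℝ)] (fun h => deriv f ((uLp (1/3) u x h + uRp (1/3) u x h) / 2)
        - deriv f ((uLm (1/3) u x h + uRm (1/3) u x h) / 2)) := by
    apply IsBigO.of_bound 1
    filter_upwards with h
    rw [one_mul, Real.norm_eq_abs, Real.norm_eq_abs]
    exact abs_abs_sub_abs_le_abs_sub _ _
  -- products
  have hP2 : (fun h => (-(1:ℝ)/2) * (|deriv f ((uLp (1/3) u x h + uRp (1/3) u x h) / 2)|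
        * lc u x ![-1/6, 2/3, -1, 2/3, -1/6] ![2, 1, 0, -1, -2] h))
      =O[𝓝[>] (0:ℝ)] fun h => h ^ 4 := by
    have := (hB.mul hδD).const_mul_left (-(1:ℝ)/2)
    simpa using this
  have hP3 : (fun h => (-(1:ℝ)/2) * ((|deriv f ((uLp (1/3) u x h + uRp (1/3) u x h) / 2)|
        - |deriv f ((uLm (1/3) u x h + uRm (1/3) u x h) / 2)|)
        * lc u x ![-1/6, 1/2, -1/2, 1/6] ![1, 0, -1, -2] h))
      =O[𝓝[>] (0:ℝ)] fun h => h ^ 4 := by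
    have h1 := ((habs.trans hE).mul hδM).const_mul_left (-(1:ℝ)/2)
    have h2 : (fun h : ℝ => h ^ 1 * h ^ 3) = fun h => h ^ 4 := by funext h; ring
    rw [h2] at h1
    exact h1
  have hT2d := div_h_isBigO hP2
  have hT3d := div_h_isBigO hP3
  have hsum := (hT1d.add hT2d).add hT3d
  apply hsum.congr' ?_ EventuallyEq.rfl
  filter_upwards [self_mem_nhdsWithin] with h hh
  have hne : (h:ℝ) ≠ 0 := ne_of_gt hh
  simp only [fsrRes, fsrFlux, uLp, uRp, uLm, uRm, lc, Fin.sum_univ_four, Fin.sum_univ_five,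
    Matrix.cons_val_zero, Matrix.cons_val_one, Matrix.head_cons, Matrix.cons_val_two,
    Matrix.tail_cons, Matrix.cons_val_three, Matrix.cons_val_four, Function.comp_apply,
    zero_mul, one_mul, add_zero, neg_mul, ← sub_eq_add_neg]
  field_simp
  ring
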